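/- Let G be a 3-regular graph, N_G the reduction network, and V_sol a vertex cover of G. Let N^E_G be obtained from N_G by deleting the arc w^v_4 r^v_4 for every v in V_sol. Then N^E_G is tree-based: its unique zig-zag decomposition contains no W-fence. -/

import Mathlib

/-- A directed graph with a distinguished root, modelling a phylogenetic network. -/
structure Net (V : Type*) where
  verts : Set V
  root : V
  arcs : Set (V × V)

namespace Net

variable {V : Type*}

/-- In-degree of a vertex. -/
noncomputable def indeg (N : Net V) (v : V) : ℕ := {a ∈ N.arcs | a.2 = v}.ncard

/-- Out-degree of a vertex. -/
noncomputable def outdeg (N : Net V) (v : V) : ℕ := {a ∈ N.arcs | a.1 = v}.ncard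

/-- A leaf: indegree 1, outdegree 0. -/
def IsLeafV (N : Net V) (v : V) : Prop := v ∈ N.verts ∧ N.indeg v = 1 ∧ N.outdeg v = 0

/-- A tree vertex: indegree 1, outdegree 2. -/
def IsTreeV (N : Net V) (v : V) : Prop := v ∈ N.verts ∧ N.indeg v = 1 ∧ N.outdeg v = 2

/-- A reticulation: indegree 2, outdegree 1. -/
def IsReticV (N : Net V) (v : V) : Prop := v ∈ N.verts ∧ N.indeg v = 2 ∧ N.outdeg v = 1

/-- The arc relation of the network. -/
def arcRel (N : Net V) (u w : V) : Prop := (u, w) ∈ N.arcs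

/-- `N` is a rooted binary phylogenetic network. -/
def IsPhylo (N : Net V) : Prop :=
  N.verts.Finite ∧ N.arcs.Finite ∧ N.root ∈ N.verts ∧
  (∀ a ∈ N.arcs, a.1 ∈ N.verts ∧ a.2 ∈ N.verts) ∧
  N.indeg N.root = 0 ∧ N.outdeg N.root = 1 ∧
  (∀ v ∈ N.verts, v = N.root ∨ N.IsTreeV v ∨ N.IsReticV v ∨ N.IsLeafV v) ∧
  (∀ v : V, ¬ Relation.TransGen N.arcRel v v)

end Net

open Net
namespace Net

variable {V : Type*}

/-- A zig-zag trail in the arc set `A`: a nonempty sequence of distinct arcs of `A`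
in which consecutive arcs share a tail or share a head. -/
def IsZigZag (A : Set (V × V)) (l : List (V × V)) : Prop :=
  l ≠ [] ∧ l.Nodup ∧ (∀ a ∈ l, a ∈ A) ∧
    l.Chain' (fun a b => a.1 = b.1 ∨ a.2 = b.2)

/-- A maximal zig-zag trail: not properly contained (as an infix, up to reversal)
in any longer zig-zag trail in `A`. -/
def IsMaximalZigZag (A : Set (V × V)) (l : List (V × V)) : Prop :=
  IsZigZag A l ∧
    ∀ l' : List (V × V), IsZigZag A l' → (l <:+: l' ∨ l <:+: l'.reverse) →
      l'.length = l.length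

/-- The non-root arcs of `N`. -/
def nonRootArcs (N : Net V) : Set (V × V) := {a ∈ N.arcs | a.1 ≠ N.root}

/-- A zig-zag decomposition: a partition of all non-root arcs of `N` into
(arc sets of) maximal zig-zag trails. -/
def IsZigZagDecomp (N : Net V) (D : Set (Set (V × V))) : Prop :=
  (∀ B ∈ D, ∃ l : List (V × V),
      IsMaximalZigZag N.nonRootArcs l ∧ {a | a ∈ l} = B) ∧
  (∀ B ∈ D, ∀ B' ∈ D, B ≠ B' → Disjoint B B') ∧
  (∀ B ∈ D, B.Nonempty) ∧
  ⋃₀ D = N.nonRootArcs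

/-- A crown: even length at least 4, closing up (first and last arcs share
a tail or share a head). -/
def IsCrown (l : List (V × V)) : Prop :=
  4 ≤ l.length ∧ Even l.length ∧
    ∃ a b : V × V, l.head? = some a ∧ l.getLast? = some b ∧ (a.1 = b.1 ∨ a.2 = b.2)

/-- An M-fence: even length at least 2, not a crown, both end tails tree vertices. -/
def IsMFence (N : Net V) (l : List (V × V)) : Prop :=
  2 ≤ l.length ∧ Even l.length ∧ ¬ IsCrown l ∧
    ∃ a b : V × V, l.head? = some a ∧ l.getLast? = some b ∧
      N.IsTreeV a.1 ∧ N.IsTreeV b.1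

/-- An N-fence: odd length, exactly one of the two end tails is a reticulation. -/
def IsNFence (N : Net V) (l : List (V × V)) : Prop :=
  Odd l.length ∧
    ∃ a b : V × V, l.head? = some a ∧ l.getLast? = some b ∧
      ((N.IsReticV a.1 ∧ ¬ N.IsReticV b.1) ∨ (¬ N.IsReticV a.1 ∧ N.IsReticV b.1))

/-- A W-fence: even length at least 2, both end tails reticulations. -/
def IsWFence (N : Net V) (l : List (V × V)) : Prop :=
  2 ≤ l.length ∧ Even l.length ∧
    ∃ a b : V × V, l.head? = some a ∧ l.getLast? = some b ∧
      N.IsReticV a.1 ∧ N.IsReticV b.1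

end Net
namespace Net

variable {V : Type*}

/-- An arc is deletable if its tail has outdegree 2 and its head is a reticulation. -/
def Deletable (N : Net V) (a : V × V) : Prop :=
  a ∈ N.arcs ∧ N.outdeg a.1 = 2 ∧ N.IsReticV a.2

/-- Deleting a set of arcs from a network. -/
def delArcs (N : Net V) (A : Set (V × V)) : Net V :=
  ⟨N.verts, N.root, N.arcs \ A⟩

/-- One suppression step: a vertex of indegree 1 and outdegree 1 is removed
and its two incident arcs are replaced by one arc. -/
def SuppStep (N N' : Net V) : Prop :=
  ∃ v p c : V, v ∈ N.verts ∧ N.indeg v = 1 ∧ N.outdeg v = 1 ∧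
    (p, v) ∈ N.arcs ∧ (v, c) ∈ N.arcs ∧
    N'.root = N.root ∧ N'.verts = N.verts \ {v} ∧
    N'.arcs = (N.arcs \ {(p, v), (v, c)}) ∪ {(p, c)}

/-- `N'` is the fully simplified version of `N`: obtained by repeated
suppressions until no vertex of indegree 1 and outdegree 1 remains. -/
def SimplifiesTo (N N' : Net V) : Prop :=
  Relation.ReflTransGen SuppStep N N' ∧
    ∀ v ∈ N'.verts, ¬ (N'.indeg v = 1 ∧ N'.outdeg v = 1)

end Net
/-- Vertices of the reduction network `N_G`: the global root, the caterpillar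
tree vertices `s_i`, and for each gadget the vertices `ρ^v`, `m^v_i`, `r^v_i`,
`w^v_i` and the leaves `l^v_i`. -/
inductive RV where
  | root
  | s (i : ℕ)
  | rho (v : ℕ)
  | m (v : ℕ) (i : ℕ)
  | r (v : ℕ) (i : ℕ)
  | w (v : ℕ) (i : ℕ)
  | lf (v : ℕ) (i : ℕ)
deriving DecidableEq

namespace RV

/-- The arcs of the gadget `Gad(v)`: the principal `N`-fence of length 15,
the leaves below `r^v_1,…,r^v_4`, and the attachment structure
`m^v_1,…,m^v_4, ρ^v`. -/
def gadgetArcs (v : ℕ) : Set (RV × RV) :=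
  {(RV.r v 0, RV.r v 1)} ∪
  {p | ∃ i : ℕ, 1 ≤ i ∧ i ≤ 6 ∧
      (p = (RV.w v i, RV.r v i) ∨ p = (RV.w v i, RV.r v (i + 1)))} ∪
  {(RV.w v 7, RV.r v 7), (RV.w v 7, RV.lf v 5)} ∪
  {p | ∃ i : ℕ, 1 ≤ i ∧ i ≤ 4 ∧ p = (RV.r v i, RV.lf v i)} ∪
  {(RV.m v 1, RV.r v 0), (RV.m v 1, RV.w v 4),
   (RV.m v 2, RV.m v 1), (RV.m v 2, RV.w v 5),
   (RV.m v 3, RV.m v 2), (RV.m v 3, RV.w v 6),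
   (RV.m v 4, RV.m v 3), (RV.m v 4, RV.r v 0),
   (RV.rho v, RV.m v 4), (RV.rho v, RV.w v 7)}

/-- The arcs connecting the gadgets below the global root `ρ` via the
caterpillar `s_0, …, s_{g-2}` (0-based indexing of the `g` gadgets). -/
def connectArcs (g : ℕ) : Set (RV × RV) :=
  {(RV.root, RV.s 0)} ∪
  {p | ∃ i : ℕ, i + 3 ≤ g ∧ p = (RV.s i, RV.s (i + 1))} ∪
  {p | ∃ i : ℕ, i + 2 ≤ g ∧ p = (RV.s i, RV.rho i)} ∪
  {(RV.s (g - 2), RV.rho (g - 1))}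

/-- The inter-gadget arcs: for each edge `uv` of `G`, the arcs
`r^u_{τ_u(v)} w^v_{π_v(u)}` and `r^v_{τ_v(u)} w^u_{π_u(v)}`. -/
def interArcs {g : ℕ} (G : SimpleGraph (Fin g)) (π τ : Fin g → Fin g → ℕ) :
    Set (RV × RV) :=
  {p | ∃ u v : Fin g, G.Adj u v ∧ p = (RV.r u (τ u v), RV.w v (π v u))}

/-- All arcs of the reduction network `N_G`. -/
def NGarcs {g : ℕ} (G : SimpleGraph (Fin g)) (π τ : Fin g → Fin g → ℕ) :
    Set (RV × RV) :=
  connectArcs g ∪ (⋃ v : Fin g, gadgetArcs v) ∪ interArcs G π τ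

/-- The reduction network `N_G`. -/
def NG {g : ℕ} (G : SimpleGraph (Fin g)) (π τ : Fin g → Fin g → ℕ) : Net RV :=
  ⟨{RV.root} ∪ {x | ∃ a ∈ NGarcs G π τ, x = a.1 ∨ x = a.2}, RV.root, NGarcs G π τ⟩

/-- The extended principal part of `Gad(v)`: the principal `N`-fence together
with the arcs `m^v_1 r^v_0` and `m^v_4 r^v_0`. -/
def extPrincipal (v : ℕ) : Set (RV × RV) :=
  {(RV.r v 0, RV.r v 1)} ∪
  {p | ∃ i : ℕ, 1 ≤ i ∧ i ≤ 6 ∧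
      (p = (RV.w v i, RV.r v i) ∨ p = (RV.w v i, RV.r v (i + 1)))} ∪
  {(RV.w v 7, RV.r v 7), (RV.w v 7, RV.lf v 5)} ∪
  {(RV.m v 1, RV.r v 0), (RV.m v 4, RV.r v 0)}

/-- `G` is 3-regular. -/
def ThreeRegular {g : ℕ} (G : SimpleGraph (Fin g)) : Prop :=
  ∀ v : Fin g, (G.neighborSet v).ncard = 3

/-- The labelling functions `π_v` are bijections from the neighbours of `v`
onto `{1,2,3}`, and the `τ_v` onto `{5,6,7}`. -/
def GoodBijections {g : ℕ} (G : SimpleGraph (Fin g)) (π τ : Fin g → Fin g → ℕ) : Prop :=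
  ∀ v : Fin g, Set.BijOn (π v) (G.neighborSet v) {1, 2, 3} ∧
    Set.BijOn (τ v) (G.neighborSet v) {5, 6, 7}

end RV


/-!
Deleting `w^v_4 r^v_4` for `v ∈ V_sol` leaves `w^v_4` and `r^v_4` with in- and outdegree one, and
these are the only such vertices; suppressing them never creates new ones. So every network met
during simplification is described by the sets of gadgets where `w^v_4` resp. `r^v_4` has
already been suppressed, and the simplified network is the one where both are suppressed for
all `v ∈ V_sol`.

In that network the only reticulations whose out-arc shares its head with another arc are the
`r^v_0`, so a W-fence has to start with `r^v_0 r^v_1`. From there the zig-zag trail is forced: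
it is the principal N-fence of `Gad(v)` (length 15) if `v ∉ V_sol`, and the N-fence
`r^v_0 r^v_1, …, w^v_3 l^v_4` of length 7 cut off by the deletion if `v ∈ V_sol`. Both have
odd length, while a W-fence has even length.
-/

namespace Net

variable {V : Type*} {N : Net V}

theorem eq_of_outdeg_eq_one {x : V} (h : N.outdeg x = 1) {a b : V × V} (ha : a ∈ N.arcs)
    (hb : b ∈ N.arcs) (hax : a.1 = x) (hbx : b.1 = x) : a = b := by
  obtain ⟨e, he⟩ := Set.ncard_eq_one.mp h
  have hmem : ∀ q ∈ N.arcs, q.1 = x → q = e := fun q hq hqx => he.subset ⟨hq, hqx⟩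
  exact (hmem a ha hax).trans (hmem b hb hbx).symm

theorem eq_of_indeg_eq_one {x : V} (h : N.indeg x = 1) {a b : V × V} (ha : a ∈ N.arcs)
    (hb : b ∈ N.arcs) (hax : a.2 = x) (hbx : b.2 = x) : a = b := by
  obtain ⟨e, he⟩ := Set.ncard_eq_one.mp h
  have hmem : ∀ q ∈ N.arcs, q.2 = x → q = e := fun q hq hqx => he.subset ⟨hq, hqx⟩
  exact (hmem a ha hax).trans (hmem b hb hbx).symm

theorem outdeg_ne_one {x y z : V} (hy : (x, y) ∈ N.arcs) (hz : (x, z) ∈ N.arcs)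
    (hyz : y ≠ z) :
    N.outdeg x ≠ 1 := fun h =>
  hyz (Prod.ext_iff.mp (eq_of_outdeg_eq_one h hy hz rfl rfl)).2

theorem indeg_ne_one {x y z : V} (hy : (y, x) ∈ N.arcs) (hz : (z, x) ∈ N.arcs)
    (hyz : y ≠ z) :
    N.indeg x ≠ 1 := fun h =>
  hyz (Prod.ext_iff.mp (eq_of_indeg_eq_one h hy hz rfl rfl)).1

theorem indeg_eq_one {x p : V} (hp : (p, x) ∈ N.arcs) (h : ∀ y, (y, x) ∈ N.arcs → y = p) :
    N.indeg x = 1 :=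
  Set.ncard_eq_one.mpr ⟨(p, x), Set.ext fun ⟨y, z⟩ =>
    ⟨fun ⟨hy, hz⟩ => by cases hz; simp [h y hy],
      fun hy => by cases hy; exact ⟨hp, rfl⟩⟩⟩

theorem outdeg_eq_one {x c : V} (hc : (x, c) ∈ N.arcs) (h : ∀ y, (x, y) ∈ N.arcs → y = c) :
    N.outdeg x = 1 :=
  Set.ncard_eq_one.mpr ⟨(x, c), Set.ext fun ⟨y, z⟩ =>
    ⟨fun ⟨hy, hz⟩ => by cases hz; simp [h z hy],
      fun hy => by cases hy; exact ⟨hc, rfl⟩⟩⟩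

def suppress (N : Net V) (v p c : V) : Net V :=
  ⟨N.verts \ {v}, N.root, (N.arcs \ {(p, v), (v, c)}) ∪ {(p, c)}⟩

theorem SuppStep.exists_eq_suppress {N' : Net V} (h : SuppStep N N') :
    ∃ v p c, N.indeg v = 1 ∧ N.outdeg v = 1 ∧ (p, v) ∈ N.arcs ∧ (v, c) ∈ N.arcs ∧
      N' = N.suppress v p c := by
  obtain ⟨v, p, c, -, hin, hout, hp, hc, hroot, hverts, harcs⟩ := h
  refine ⟨v, p, c, hin, hout, hp, hc, ?_⟩
  cases N'
  simp_all [suppress]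

theorem arcs_subset_of_reflTransGen {S : Set (V × V)}
    (hS : ∀ p x c, (p, x) ∈ S → (x, c) ∈ S → (p, c) ∈ S) {N' : Net V}
    (h : Relation.ReflTransGen SuppStep N N') (h0 : N.arcs ⊆ S) : N'.arcs ⊆ S := by
  induction h with
  | refl => exact h0
  | tail _ hstep ih =>
    obtain ⟨v, p, c, -, -, hp, hc, rfl⟩ := hstep.exists_eq_suppress
    rintro a (⟨ha, -⟩ | rfl)
    exacts [ih ha, hS p v c (ih hp) (ih hc)]

theorem root_eq_of_reflTransGen {N' : Net V} (h : Relation.ReflTransGen SuppStep N N') :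
    N'.root = N.root := by
  induction h with
  | refl => rfl
  | tail _ hstep ih =>
    obtain ⟨v, p, c, -, -, -, -, rfl⟩ := hstep.exists_eq_suppress
    exact ih

/-- A zig-zag trail in `A` that starts like `t` can only continue along `t`. -/
def IsForced (A : Set (V × V)) (t : List (V × V)) : Prop :=
  ∀ k (hk : k < t.length), ∀ b ∈ A, (t[k].1 = b.1 ∨ t[k].2 = b.2) → b ∈ t.take (k + 2)

theorem IsZigZag.isPrefix_of_forced {A : Set (V × V)} {t l : List (V × V)}
    (hforced : IsForced A t) (hl : IsZigZag A l) (hhead : l.head? = t.head?) : l <+: t := by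
  obtain ⟨hne, hnd, hA, hchain⟩ := hl
  have htake : ∀ n, 1 ≤ n → n ≤ l.length → n ≤ t.length ∧ l.take n = t.take n := by
    intro n h1 hn
    induction n, h1 using Nat.le_induction with
    | base =>
      obtain ⟨x, l', rfl⟩ := List.exists_cons_of_ne_nil hne
      obtain ⟨y, t', rfl⟩ := List.exists_cons_of_ne_nil (l := t) (by rintro rfl; simp at hhead)
      simp_all
    | succ n h1 ih =>
      obtain ⟨hnt, htake⟩ := ih (by omega)
      have hn : n < l.length := by omega
      have hprev : l[n - 1]? = t[n - 1]? := by
        simpa [show n - 1 < n by omega] using congrArg (·[n - 1]?) htake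
      have hshare : (t[n - 1]'(by omega)).1 = l[n].1 ∨ (t[n - 1]'(by omega)).2 = l[n].2 := by
        have := List.isChain_iff_getElem.mp hchain (n - 1) (by omega)
        grind
      have hnotin : l[n] ∉ t.take n := by
        rw [← htake]
        intro hmem
        obtain ⟨j, hj, hjn⟩ := List.getElem_of_mem hmem
        rw [List.getElem_take, hnd.getElem_inj_iff] at hjn
        simp at hj
        omega
      have hmem := hforced (n - 1) (by omega) l[n] (hA _ (List.getElem_mem _)) hshare
      rw [show n - 1 + 2 = n + 1 by omega, List.take_add_one] at hmem
      have hnext : t[n]? = some l[n] := by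
        simpa [hnotin] using hmem
      refine ⟨(List.getElem?_eq_some_iff.mp hnext).1, ?_⟩
      rw [List.take_add_one, List.take_add_one, htake, hnext, List.getElem?_eq_getElem hn]
  rw [← List.take_length (l := l), (htake l.length (List.length_pos_iff.mpr hne) le_rfl).2]
  exact List.take_prefix _ _

theorem IsMaximalZigZag.length_eq_of_forced {A : Set (V × V)} {t l : List (V × V)}
    (hl : IsMaximalZigZag A l) (ht : IsZigZag A t) (hforced : IsForced A t)
    (hhead : l.head? = t.head?) : l.length = t.length :=
  (hl.2 t ht (Or.inl (hl.1.isPrefix_of_forced hforced hhead).isInfix)).symm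

theorem IsWFence.exists_eq_cons_cons {l : List (V × V)} (hz : IsZigZag N.nonRootArcs l)
    (hW : N.IsWFence l) :
    ∃ a b t, l = a :: b :: t ∧ a ∈ N.nonRootArcs ∧ N.outdeg a.1 = 1 ∧ b ∈ N.arcs ∧
      b.2 = a.2 ∧ b ≠ a := by
  obtain ⟨-, hnd, hA, hchain⟩ := hz
  obtain ⟨hlen, -, a', -, hhead, -, hret, -⟩ := hW
  rcases l with _ | ⟨a, _ | ⟨b, t⟩⟩
  · simp at hlen
  · simp at hlen
  obtain rfl : a = a' := by simpa using hhead
  have hba : b ≠ a := by rintro rfl; simp at hnd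
  have ha := hA a (by simp)
  have hb := hA b (by simp)
  refine ⟨a, b, t, rfl, ha, hret.2.2, hb.1, ?_, hba⟩
  rcases (List.isChain_cons_cons.mp hchain).1 with h | h
  · exact absurd (eq_of_outdeg_eq_one hret.2.2 hb.1 ha.1 h.symm rfl) hba
  · exact h.symm

end Net

namespace RV

variable {g : ℕ} {G : SimpleGraph (Fin g)} {π τ : Fin g → Fin g → ℕ}
  {Vsol A B : Set (Fin g)}

theorem GoodBijections.pi_bounds (hbij : GoodBijections G π τ) :
    ∀ u v, G.Adj u v → 1 ≤ π v u ∧ π v u ≤ 3 := fun u v h => by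
  have := (hbij v).1.mapsTo h.symm
  simp only [Set.mem_insert_iff, Set.mem_singleton_iff] at this
  omega

theorem GoodBijections.tau_bounds (hbij : GoodBijections G π τ) :
    ∀ u v, G.Adj u v → 5 ≤ τ u v ∧ τ u v ≤ 7 := fun u v h => by
  have := (hbij u).2.mapsTo h
  simp only [Set.mem_insert_iff, Set.mem_singleton_iff] at this
  omega

-- Unfolding `NGarcs` inside `simp` would first normalise its set expressions, which is slow.
@[simp] theorem mem_NGarcs {q : RV × RV} : q ∈ NGarcs G π τ ↔
    q = (root, s 0) ∨ (∃ i, i + 3 ≤ g ∧ q = (s i, s (i + 1))) ∨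
    (∃ i, i + 2 ≤ g ∧ q = (s i, rho i)) ∨ q = (s (g - 2), rho (g - 1)) ∨
    (∃ v : Fin g, q = (r v 0, r v 1)) ∨
    (∃ (v : Fin g) (i : ℕ), 1 ≤ i ∧ i ≤ 6 ∧ q = (w v i, r v i)) ∨
    (∃ (v : Fin g) (i : ℕ), 1 ≤ i ∧ i ≤ 6 ∧ q = (w v i, r v (i + 1))) ∨
    (∃ v : Fin g, q = (w v 7, r v 7)) ∨ (∃ v : Fin g, q = (w v 7, lf v 5)) ∨
    (∃ (v : Fin g) (i : ℕ), 1 ≤ i ∧ i ≤ 4 ∧ q = (r v i, lf v i)) ∨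
    (∃ v : Fin g, q = (m v 1, r v 0)) ∨ (∃ v : Fin g, q = (m v 1, w v 4)) ∨
    (∃ v : Fin g, q = (m v 2, m v 1)) ∨ (∃ v : Fin g, q = (m v 2, w v 5)) ∨
    (∃ v : Fin g, q = (m v 3, m v 2)) ∨ (∃ v : Fin g, q = (m v 3, w v 6)) ∨
    (∃ v : Fin g, q = (m v 4, m v 3)) ∨ (∃ v : Fin g, q = (m v 4, r v 0)) ∨
    (∃ v : Fin g, q = (rho v, m v 4)) ∨ (∃ v : Fin g, q = (rho v, w v 7)) ∨
    ∃ u v : Fin g, G.Adj u v ∧ q = (r u (τ u v), w v (π v u)) := by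
  simp only [NGarcs, connectArcs, gadgetArcs, interArcs, Set.mem_union, Set.mem_insert_iff,
    Set.mem_singleton_iff, Set.mem_ofPred_eq, Set.mem_iUnion, and_or_left, exists_or, or_assoc]

/-- The network obtained from `N^E_G` by suppressing `w^v_4` for `v ∈ A`, which merges
`m^v_1 w^v_4, w^v_4 r^v_5` into `m^v_1 r^v_5`, and `r^v_4` for `v ∈ B`, which merges
`w^v_3 r^v_4, r^v_4 l^v_4` into `w^v_3 l^v_4`. -/
def stage (G : SimpleGraph (Fin g)) (π τ : Fin g → Fin g → ℕ) (Vsol A B : Set (Fin g)) :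
    Net RV where
  verts := (NG G π τ).verts \ ((fun v : Fin g => w v 4) '' A ∪ (fun v : Fin g => r v 4) '' B)
  root := RV.root
  arcs := NGarcs G π τ \
      ({a | ∃ v ∈ Vsol, a = (w v 4, r v 4)} ∪
        {a | ∃ v ∈ A, a = (m v 1, w v 4) ∨ a = (w v 4, r v 5)} ∪
        {a | ∃ v ∈ B, a = (w v 3, r v 4) ∨ a = (r v 4, lf v 4)}) ∪
    {a | ∃ v ∈ A, a = (m v 1, r v 5)} ∪ {a | ∃ v ∈ B, a = (w v 3, lf v 4)}

@[simp] theorem mem_stage_arcs {q : RV × RV} : q ∈ (stage G π τ Vsol A B).arcs ↔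
    (q ∈ NGarcs G π τ ∧ ¬ (∃ v ∈ Vsol, q = (w v 4, r v 4)) ∧
      ¬ (∃ v ∈ A, q = (m v 1, w v 4) ∨ q = (w v 4, r v 5)) ∧
      ¬ (∃ v ∈ B, q = (w v 3, r v 4) ∨ q = (r v 4, lf v 4))) ∨
    (∃ v ∈ A, q = (m v 1, r v 5)) ∨ ∃ v ∈ B, q = (w v 3, lf v 4) := by
  simp only [stage, Set.mem_union, Set.mem_sdiff, Set.mem_ofPred_eq, not_or, or_assoc]

attribute [local simp] Fin.val_inj

theorem suppress_stage_w4 (v : Fin g) :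
    (stage G π τ Vsol A B).suppress (w v 4) (m v 1) (r v 5) =
      stage G π τ Vsol (insert v A) B := by
  simp only [stage, Net.suppress, Net.mk.injEq, true_and]
  constructor
  · ext x
    simp only [Set.mem_sdiff, Set.mem_union, Set.mem_image, Set.mem_insert_iff,
      Set.mem_singleton_iff]
    aesop
  · ext q
    simp only [Set.mem_union, Set.mem_sdiff, Set.mem_ofPred_eq, Set.mem_insert_iff,
      Set.mem_singleton_iff]
    aesop

theorem suppress_stage_r4 (v : Fin g) :
    (stage G π τ Vsol A B).suppress (r v 4) (w v 3) (lf v 4) =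
      stage G π τ Vsol A (insert v B) := by
  simp only [stage, Net.suppress, Net.mk.injEq, true_and]
  constructor
  · ext x
    simp only [Set.mem_sdiff, Set.mem_union, Set.mem_image, Set.mem_insert_iff,
      Set.mem_singleton_iff]
    aesop
  · ext q
    simp only [Set.mem_union, Set.mem_sdiff, Set.mem_ofPred_eq, Set.mem_insert_iff,
      Set.mem_singleton_iff]
    aesop

theorem stage_empty :
    stage G π τ Vsol ∅ ∅ = (NG G π τ).delArcs {a | ∃ v ∈ Vsol, a = (w v 4, r v 4)} := by
  simp [stage, NG, Net.delArcs]

open Net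

theorem outdeg_s_ne_one (hg : 2 ≤ g) {i : ℕ} {c : RV}
    (hc : (s i, c) ∈ (stage G π τ Vsol A B).arcs) :
    (stage G π τ Vsol A B).outdeg (s i) ≠ 1 := by
  have hi : i + 2 ≤ g := by simp at hc; omega
  by_cases h3 : i + 3 ≤ g
  · exact outdeg_ne_one (y := s (i + 1)) (z := rho i) (by simp [h3]) (by simp [hi]) (by simp)
  · exact outdeg_ne_one (y := rho i) (z := rho (i + 1)) (by simp [hi]) (by simp; omega) (by simp)

theorem outdeg_rho_ne_one {n : ℕ} {c : RV} (hc : (rho n, c) ∈ (stage G π τ Vsol A B).arcs) :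
    (stage G π τ Vsol A B).outdeg (rho n) ≠ 1 := by
  obtain ⟨v, rfl⟩ : ∃ v : Fin g, n = v := by simp at hc; aesop
  exact outdeg_ne_one (y := m v 4) (z := w v 7) (by simp) (by simp) (by simp)

theorem outdeg_m_ne_one {n i : ℕ} {c : RV} (hc : (m n i, c) ∈ (stage G π τ Vsol A B).arcs) :
    (stage G π τ Vsol A B).outdeg (m n i) ≠ 1 := by
  obtain ⟨v, rfl, hi1, hi4⟩ : ∃ v : Fin g, n = v ∧ 1 ≤ i ∧ i ≤ 4 := by
    simp at hc; aesop
  interval_cases i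
  · by_cases hv : v ∈ A
    · exact outdeg_ne_one (y := r v 0) (z := r v 5) (by simp) (by simp [hv]) (by simp)
    · exact outdeg_ne_one (y := r v 0) (z := w v 4) (by simp) (by simp [hv]) (by simp)
  · exact outdeg_ne_one (y := m v 1) (z := w v 5) (by simp) (by simp) (by simp)
  · exact outdeg_ne_one (y := m v 2) (z := w v 6) (by simp) (by simp) (by simp)
  · exact outdeg_ne_one (y := m v 3) (z := r v 0) (by simp) (by simp) (by simp)

theorem outdeg_w_ne_one (hA : A ⊆ Vsol) {v : Fin g} {i : ℕ} {c : RV}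
    (hc : (w v i, c) ∈ (stage G π τ Vsol A B).arcs) (hi : ¬ (i = 4 ∧ v ∈ Vsol)) :
    (stage G π τ Vsol A B).outdeg (w v i) ≠ 1 := by
  have hi17 : 1 ≤ i ∧ i ≤ 7 := by simp at hc; grind
  by_cases h7 : i = 7
  · subst h7
    exact outdeg_ne_one (y := r v 7) (z := lf v 5) (by simp) (by simp) (by simp)
  by_cases h3 : i = 3 ∧ v ∈ B
  · obtain ⟨rfl, hv⟩ := h3
    exact outdeg_ne_one (y := r v 3) (z := lf v 4) (by simp) (by simp [hv]) (by simp)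
  have hiA : ¬ (i = 4 ∧ v ∈ A) := fun h => hi ⟨h.1, hA h.2⟩
  exact outdeg_ne_one (y := r v i) (z := r v (i + 1)) (by simp; grind) (by simp; grind) (by simp)

theorem tail_cases_of_outdeg_eq_one (hg : 2 ≤ g) (hA : A ⊆ Vsol) {x c : RV}
    (hc : (x, c) ∈ (stage G π τ Vsol A B).arcs) (hout : (stage G π τ Vsol A B).outdeg x = 1) :
    x = RV.root ∨ (∃ n i, x = r n i) ∨
      ∃ v ∈ Vsol, v ∉ A ∧ x = w v 4 ∧ c = r v 5 := by
  cases x with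
  | root => exact Or.inl rfl
  | r n i => exact Or.inr (Or.inl ⟨n, i, rfl⟩)
  | s i => exact absurd hout (outdeg_s_ne_one hg hc)
  | rho n => exact absurd hout (outdeg_rho_ne_one hc)
  | m n i => exact absurd hout (outdeg_m_ne_one hc)
  | lf n i => simp at hc
  | w n i =>
    obtain ⟨v, rfl⟩ : ∃ v : Fin g, n = v := by simp at hc; aesop
    by_cases hi : i = 4 ∧ v ∈ Vsol
    · obtain ⟨rfl, hv⟩ := hi
      have : v ∉ A ∧ c = r v 5 := by simp at hc; aesop
      exact Or.inr (Or.inr ⟨v, hv, this.1, rfl, this.2⟩)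
    · exact absurd hout (outdeg_w_ne_one hA hc hi)

theorem indeg_r_ne_one (hB : B ⊆ Vsol) {v : Fin g} {i : ℕ} (hi : i ≤ 7)
    (hiv : ¬ (i = 4 ∧ v ∈ Vsol)) : (stage G π τ Vsol A B).indeg (r v i) ≠ 1 := by
  interval_cases i
  · exact indeg_ne_one (y := m v 1) (z := m v 4) (by simp) (by simp) (by simp)
  · exact indeg_ne_one (y := r v 0) (z := w v 1) (by simp) (by simp) (by simp)
  · exact indeg_ne_one (y := w v 1) (z := w v 2) (by simp) (by simp) (by simp)
  · exact indeg_ne_one (y := w v 2) (z := w v 3) (by simp) (by simp) (by simp)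
  · have hv : v ∉ Vsol := fun hv => hiv ⟨rfl, hv⟩
    exact indeg_ne_one (y := w v 3) (z := w v 4) (by simp; grind) (by simp [hv]) (by simp)
  · by_cases hv : v ∈ A
    · exact indeg_ne_one (y := m v 1) (z := w v 5) (by simp [hv]) (by simp) (by simp)
    · exact indeg_ne_one (y := w v 4) (z := w v 5) (by simp [hv]) (by simp) (by simp)
  · exact indeg_ne_one (y := w v 5) (z := w v 6) (by simp) (by simp) (by simp)
  · exact indeg_ne_one (y := w v 6) (z := w v 7) (by simp) (by simp) (by simp)

theorem eq_w4_or_r4_of_suppressible (hg : 2 ≤ g) (hbij : GoodBijections G π τ) (hA : A ⊆ Vsol)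
    (hB : B ⊆ Vsol) {x p c : RV} (hp : (p, x) ∈ (stage G π τ Vsol A B).arcs)
    (hc : (x, c) ∈ (stage G π τ Vsol A B).arcs) (hin : (stage G π τ Vsol A B).indeg x = 1)
    (hout : (stage G π τ Vsol A B).outdeg x = 1) :
    (∃ v ∈ Vsol, v ∉ A ∧ x = w v 4 ∧ p = m v 1 ∧ c = r v 5) ∨
      (∃ v ∈ Vsol, v ∉ B ∧ x = r v 4 ∧ p = w v 3 ∧ c = lf v 4) := by
  rcases tail_cases_of_outdeg_eq_one hg hA hc hout with
    rfl | ⟨n, i, rfl⟩ | ⟨v, hv, hvA, rfl, rfl⟩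
  · simp at hp
  · obtain ⟨v, rfl, hi⟩ : ∃ v : Fin g, n = v ∧ i ≤ 7 := by
      simp at hp
      grind
    by_cases hiv : i = 4 ∧ v ∈ Vsol
    · obtain ⟨rfl, hv⟩ := hiv
      have hτ := hbij.tau_bounds
      refine Or.inr ⟨v, hv, ?_, rfl, ?_, ?_⟩ <;> simp at hp hc <;> grind
    · exact absurd hin (indeg_r_ne_one hB hi hiv)
  · refine Or.inl ⟨v, hv, hvA, rfl, ?_, rfl⟩
    have hπ := hbij.pi_bounds
    simp at hp
    grind

theorem exists_stage_of_suppStep (hg : 2 ≤ g) (hbij : GoodBijections G π τ) (hA : A ⊆ Vsol)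
    (hB : B ⊆ Vsol) {N : Net RV} (h : SuppStep (stage G π τ Vsol A B) N) :
    ∃ A' ⊆ Vsol, ∃ B' ⊆ Vsol, N = stage G π τ Vsol A' B' := by
  obtain ⟨x, p, c, hin, hout, hp, hc, rfl⟩ := h.exists_eq_suppress
  rcases eq_w4_or_r4_of_suppressible hg hbij hA hB hp hc hin hout with
    ⟨v, hv, -, rfl, rfl, rfl⟩ | ⟨v, hv, -, rfl, rfl, rfl⟩
  · exact ⟨insert v A, Set.insert_subset hv hA, B, hB, suppress_stage_w4 v⟩
  · exact ⟨A, hA, insert v B, Set.insert_subset hv hB, suppress_stage_r4 v⟩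

theorem exists_stage_of_reflTransGen (hg : 2 ≤ g) (hbij : GoodBijections G π τ) {N : Net RV}
    (h : Relation.ReflTransGen SuppStep
      ((NG G π τ).delArcs {a | ∃ v ∈ Vsol, a = (w v 4, r v 4)}) N) :
    ∃ A ⊆ Vsol, ∃ B ⊆ Vsol, N = stage G π τ Vsol A B := by
  rw [← stage_empty] at h
  induction h with
  | refl => exact ⟨∅, Set.empty_subset _, ∅, Set.empty_subset _, rfl⟩
  | tail _ hstep ih =>
    obtain ⟨A, hA, B, hB, rfl⟩ := ih
    exact exists_stage_of_suppStep hg hbij hA hB hstep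

theorem snd_mem_NG_verts {x y : RV} (h : (x, y) ∈ NGarcs G π τ) : y ∈ (NG G π τ).verts :=
  Or.inr ⟨(x, y), h, Or.inr rfl⟩

theorem eq_Vsol_of_simplified (hbij : GoodBijections G π τ) (hA : A ⊆ Vsol) (hB : B ⊆ Vsol)
    (hterm : ∀ x ∈ (stage G π τ Vsol A B).verts,
      ¬ ((stage G π τ Vsol A B).indeg x = 1 ∧ (stage G π τ Vsol A B).outdeg x = 1)) :
    A = Vsol ∧ B = Vsol := by
  have hπ := hbij.pi_bounds
  have hτ := hbij.tau_bounds
  refine ⟨hA.antisymm fun v hv => ?_, hB.antisymm fun v hv => ?_⟩ <;> by_contra hvAB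
  · refine hterm (w v 4) ?_ ⟨indeg_eq_one (p := m v 1) (by simp [hvAB]) fun y hy => ?_,
      outdeg_eq_one (c := r v 5) (by simp [hvAB]) fun y hy => ?_⟩
    · exact ⟨snd_mem_NG_verts (x := m v 1) (by simp), by simp [hvAB]⟩
    · simp at hy; grind
    · simp at hy; grind
  · refine hterm (r v 4) ?_ ⟨indeg_eq_one (p := w v 3) (by simp [hvAB]) fun y hy => ?_,
      outdeg_eq_one (c := lf v 4) (by simp [hvAB]) fun y hy => ?_⟩
    · exact ⟨snd_mem_NG_verts (x := w v 3) (by simp), by simp [hvAB]⟩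
    · simp at hy; grind
    · simp at hy; grind

theorem eq_r0_r1_of_outdeg_eq_one (hg : 2 ≤ g) (hbij : GoodBijections G π τ) {a b : RV × RV}
    (ha : a ∈ (stage G π τ Vsol Vsol Vsol).nonRootArcs)
    (hout : (stage G π τ Vsol Vsol Vsol).outdeg a.1 = 1)
    (hb : b ∈ (stage G π τ Vsol Vsol Vsol).arcs) (hba : b.2 = a.2) (hne : b ≠ a) :
    ∃ v : Fin g, a = (r v 0, r v 1) := by
  obtain ⟨x, y⟩ := a
  obtain ⟨ha, hroot⟩ := ha
  rcases tail_cases_of_outdeg_eq_one hg le_rfl ha hout with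
    rfl | ⟨n, i, rfl⟩ | ⟨v, hv, hvA, -⟩
  · exact absurd rfl hroot
  · obtain ⟨x', y'⟩ := b
    obtain rfl : y' = y := hba
    have hπ := hbij.pi_bounds
    have hinj : ∀ v u u', G.Adj u v → G.Adj u' v → π v u = π v u' → u = u' :=
      fun v u u' hu hu' h => (hbij v).1.injOn hu.symm hu'.symm h
    simp at ha
    obtain ⟨⟨v, ⟨rfl, rfl⟩, rfl⟩ | ⟨hi1, hi4, v, rfl, rfl⟩ | ⟨u, v, huv, ⟨rfl, rfl⟩, rfl⟩, hi⟩ :=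
      ha
    · exact ⟨v, rfl⟩
    · simp at hb
      grind
    · simp at hb
      grind
  · exact absurd hv hvA

def splitTrail (v : ℕ) : List (RV × RV) :=
  [(r v 0, r v 1), (w v 1, r v 1), (w v 1, r v 2), (w v 2, r v 2), (w v 2, r v 3),
    (w v 3, r v 3), (w v 3, lf v 4)]

def principalTrail (v : ℕ) : List (RV × RV) :=
  [(r v 0, r v 1), (w v 1, r v 1), (w v 1, r v 2), (w v 2, r v 2), (w v 2, r v 3),
    (w v 3, r v 3), (w v 3, r v 4), (w v 4, r v 4), (w v 4, r v 5), (w v 5, r v 5),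
    (w v 5, r v 6), (w v 6, r v 6), (w v 6, r v 7), (w v 7, r v 7), (w v 7, lf v 5)]

theorem isZigZag_splitTrail {v : Fin g} (hv : v ∈ Vsol) :
    IsZigZag (stage G π τ Vsol Vsol Vsol).nonRootArcs (splitTrail v) := by
  refine ⟨by simp [splitTrail], by simp [splitTrail], ?_,
    show List.IsChain _ (splitTrail v) by simp [splitTrail]⟩
  simp [splitTrail, nonRootArcs, stage, hv]

theorem isZigZag_principalTrail {v : Fin g} (hv : v ∉ Vsol) :
    IsZigZag (stage G π τ Vsol Vsol Vsol).nonRootArcs (principalTrail v) := by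
  refine ⟨by simp [principalTrail], by simp [principalTrail], ?_,
    show List.IsChain _ (principalTrail v) by simp [principalTrail]⟩
  simp [principalTrail, nonRootArcs, stage]
  exact fun x hx h => hv (h ▸ hx)

theorem isForced_splitTrail (hbij : GoodBijections G π τ) {v : Fin g} (hv : v ∈ Vsol) :
    IsForced (stage G π τ Vsol Vsol Vsol).nonRootArcs (splitTrail v) := by
  have hτ := hbij.tau_bounds
  rintro k hk ⟨x, y⟩ ⟨hb, -⟩ hshare
  simp only [splitTrail, List.length_cons, List.length_nil] at hk
  interval_cases k <;> simp [splitTrail] at hshare ⊢ <;> rcases hshare with rfl | rfl <;>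
    simp at hb <;> grind

theorem isForced_principalTrail (hbij : GoodBijections G π τ) {v : Fin g} (hv : v ∉ Vsol) :
    IsForced (stage G π τ Vsol Vsol Vsol).nonRootArcs (principalTrail v) := by
  have hτ := hbij.tau_bounds
  rintro k hk ⟨x, y⟩ ⟨hb, -⟩ hshare
  simp only [principalTrail, List.length_cons, List.length_nil] at hk
  interval_cases k <;> simp [principalTrail] at hshare ⊢ <;> rcases hshare with rfl | rfl <;>
    simp at hb <;> grind

theorem odd_length_of_head_eq (hbij : GoodBijections G π τ) {l : List (RV × RV)}
    (hl : IsMaximalZigZag (stage G π τ Vsol Vsol Vsol).nonRootArcs l) {v : Fin g}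
    (hhead : l.head? = some (r v 0, r v 1)) : Odd l.length := by
  by_cases hv : v ∈ Vsol
  · rw [hl.length_eq_of_forced (isZigZag_splitTrail hv) (isForced_splitTrail hbij hv) hhead]
    exact ⟨3, rfl⟩
  · rw [hl.length_eq_of_forced (isZigZag_principalTrail hv) (isForced_principalTrail hbij hv)
      hhead]
    exact ⟨7, rfl⟩

theorem ThreeRegular.four_le (hreg : ThreeRegular G) (v : Fin g) : 4 ≤ g := by
  have hv : v ∉ G.neighborSet v := G.loopless.irrefl v
  have hss : G.neighborSet v ⊂ Set.univ :=
    Set.ssubset_univ_iff.mpr fun h => hv (h ▸ Set.mem_univ v)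
  have := Set.ncard_lt_ncard hss
  rw [hreg v, Set.ncard_univ, Nat.card_eq_fintype_card, Fintype.card_fin] at this
  omega

-- For `g = 0` the truncated subtractions in `connectArcs` make `N_G` the path
-- `ρ → s₀ → ρ⁰`.
theorem length_le_one_of_zero {G : SimpleGraph (Fin 0)} {π τ : Fin 0 → Fin 0 → ℕ}
    {D : Set (RV × RV)} {N : Net RV}
    (h : Relation.ReflTransGen SuppStep ((NG G π τ).delArcs D) N) {l : List (RV × RV)}
    (hl : IsZigZag N.nonRootArcs l) : l.length ≤ 1 := by
  have harcs := arcs_subset_of_reflTransGen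
    (S := {(RV.root, s 0), (s 0, rho 0), (RV.root, rho 0)}) (by simp; grind) h
    (fun q hq => by have : q ∈ NGarcs G π τ := hq.1; simp at this ⊢; grind)
  have hroot : N.root = RV.root := root_eq_of_reflTransGen h
  have hsub : l ⊆ [(s 0, rho 0)] := fun q hq => by
    obtain ⟨hq, hqr⟩ := hl.2.2.1 q hq
    have := harcs hq
    simp only [Set.mem_insert_iff, Set.mem_singleton_iff] at this
    rw [hroot] at hqr
    rcases this with rfl | rfl | rfl <;> simp_all
  exact (List.subperm_of_subset hl.2.1 hsub).length_le

end RV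

open RV in
theorem deleted_network_tree_based_general {g : ℕ} (G : SimpleGraph (Fin g))
    (π τ : Fin g → Fin g → ℕ)
    (hreg : ThreeRegular G) (hbij : GoodBijections G π τ)
    (Vsol : Set (Fin g))
    (NE : Net RV)
    (hNE : Net.SimplifiesTo
      ((NG G π τ).delArcs {a | ∃ v ∈ Vsol, a = (RV.w (v : ℕ) 4, RV.r (v : ℕ) 4)}) NE) :
    ∀ l : List (RV × RV), Net.IsMaximalZigZag NE.nonRootArcs l → ¬ NE.IsWFence l := by
  obtain ⟨hsteps, hterm⟩ := hNE
  intro l hl hW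
  rcases Nat.eq_zero_or_pos g with rfl | hpos
  · have := length_le_one_of_zero hsteps hl.1
    exact absurd hW.1 (by omega)
  have hg : 2 ≤ g := by have := hreg.four_le ⟨0, hpos⟩; omega
  obtain ⟨A, hA, B, hB, rfl⟩ := exists_stage_of_reflTransGen hg hbij hsteps
  obtain ⟨rfl, rfl⟩ := eq_Vsol_of_simplified hbij hA hB hterm
  obtain ⟨a, b, t, rfl, ha, hout, hb, hba, hne⟩ := hW.exists_eq_cons_cons hl.1
  obtain ⟨v, rfl⟩ := eq_r0_r1_of_outdeg_eq_one hg hbij ha hout hb hba hne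
  exact Nat.not_even_iff_odd.mpr (odd_length_of_head_eq hbij hl rfl) hW.2.1

open RV in
/-- If `V_sol` is a vertex cover of the 3-regular graph `G`, then the network
`N^E_G`, obtained from `N_G` by deleting the arc `w^v_4 r^v_4` for every
`v ∈ V_sol` (and simplifying), is tree-based: its zig-zag decomposition
contains no W-fence. -/
theorem deleted_network_tree_based {g : ℕ} (G : SimpleGraph (Fin g))
    (π τ : Fin g → Fin g → ℕ)
    (hreg : ThreeRegular G) (hbij : GoodBijections G π τ)
    (Vsol : Set (Fin g)) (hcov : ∀ u v : Fin g, G.Adj u v → u ∈ Vsol ∨ v ∈ Vsol)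
    (NE : Net RV)
    (hNE : Net.SimplifiesTo
      ((NG G π τ).delArcs {a | ∃ v ∈ Vsol, a = (RV.w (v : ℕ) 4, RV.r (v : ℕ) 4)}) NE) :
    ∀ l : List (RV × RV), Net.IsMaximalZigZag NE.nonRootArcs l → ¬ NE.IsWFence l :=
  deleted_network_tree_based_general G π τ hreg hbij Vsol NE hNE
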